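/- Under the geometric hypotheses: ω ⊂ ℝ² a bounded domain, θ : closure(ω) → ℝ³ injective of class C³ with a_α := ∂_α θ linearly independent on closure(ω), a₃ := (a₁ × a₂)/|a₁ × a₂|, Θ(y, x₃) := θ(y) + x₃ a₃(y), and ε₀ > 0 such that g_i := ∂_i Θ are linearly independent on closure(ω) × [−ε₀, ε₀], let λ ≥ 0 and μ > 0, let Ω := ω × (−1,1), and for 0 < ε ≤ ε₀ define (g^{ij}(ε)(x)) as the inverse of (g_i · g_j)(y, εx₃) and A^{ijkl}(ε) := λ g^{ij}(ε) g^{kl}(ε) + μ (g^{ik}(ε) g^{jl}(ε) + g^{il}(ε) g^{jk}(ε)). Then there exists a constant C_e > 0, independent of ε and x, such that for all ε with 0 < ε ≤ ε₀, all x ∈ closure(Ω), and all symmetric 3×3 real matrices t = (t_{ij}): Σ_{i,j=1}^{3} |t_{ij}|² ≤ C_e · Σ_{i,j,k,l=1}^{3} A^{ijkl}(ε)(x) t_{kl} t_{ij}. -/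

import Mathlib

/-!
With `S = G⁻¹` at the point `(y, ε x₃)`, the form `∑ A^{ijkl}(ε) t_kl t_ij` equals
`λ (∑ S_ij t_ij)² + 2μ vec(t) · (S ⊗ S) vec(t)` for symmetric `t`, which is positive for `t ≠ 0`
because the Kronecker square of a positive definite matrix is positive definite. The points
`(y, ε x₃)` stay in the compact set `closure ω × [-ε₀, ε₀]`, where `G` is a continuous Gram matrix
of independent vectors (`Θ` is `C¹` near it since `a₁ × a₂ ≠ 0`). So `S` ranges over a compact
set of positive definite matrices, the form has a positive minimum on this set times the unit
sphere of symmetric matrices, and homogeneity in `t` gives the bound.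
-/

open Set Matrix Kronecker

theorem Matrix.posDef_of_linearIndependent_dotProduct {ι κ : Type*} [Fintype ι] [Fintype κ]
    {v : ι → κ → ℝ} (hv : LinearIndependent ℝ v) : (of fun i j => v i ⬝ᵥ v j).PosDef := by
  have hgram : (of fun i j => v i ⬝ᵥ v j) = of v * (of v)ᴴ := by
    ext i j; simp [mul_apply, dotProduct]
  rw [hgram]
  exact .mul_conjTranspose_self _ (vecMul_injective_iff.2 hv)

theorem ContinuousOn.matrix_inv {X n : Type*} [TopologicalSpace X] [Fintype n] [DecidableEq n]
    {G : X → Matrix n n ℝ} {s : Set X} (hG : ContinuousOn G s) (hdet : ∀ x ∈ s, (G x).det ≠ 0) :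
    ContinuousOn (fun x => (G x)⁻¹) s := fun x hx =>
  (continuousAt_matrix_inv _ (by rw [Ring.inverse_eq_inv']; exact continuousAt_inv₀ (hdet x hx))
    ).comp_continuousWithinAt (hG x hx)

section IsotropicForm

variable {n : Type*} [Fintype n]

def isotropicForm (lam mu : ℝ) (S t : Matrix n n ℝ) : ℝ :=
  ∑ i, ∑ j, ∑ k, ∑ l,
    (lam * S i j * S k l + mu * (S i k * S j l + S i l * S j k)) * t k l * t i j

theorem isotropicForm_eq (lam mu : ℝ) (S : Matrix n n ℝ) {t : Matrix n n ℝ} (ht : t.IsSymm) :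
    isotropicForm lam mu S t = lam * (∑ i, ∑ j, S i j * t i j) ^ 2
      + 2 * mu * (vec t ⬝ᵥ (S ⊗ₖ S) *ᵥ vec t) := by
  have hlam : ∑ i, ∑ j, ∑ k, ∑ l, S i j * S k l * t k l * t i j
      = (∑ i, ∑ j, S i j * t i j) ^ 2 := by
    simp only [sq, Finset.sum_mul, Finset.mul_sum]
    refine Fintype.sum_congr _ _ fun i => Fintype.sum_congr _ _ fun j =>
      Fintype.sum_congr _ _ fun k => Fintype.sum_congr _ _ fun l => by ring
  have hkron : ∑ i, ∑ j, ∑ k, ∑ l, S i k * S j l * t k l * t i j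
      = vec t ⬝ᵥ (S ⊗ₖ S) *ᵥ vec t := by
    simp only [dotProduct, mulVec, vec, Fintype.sum_prod_type, kronecker_apply, Finset.mul_sum]
    rw [Finset.sum_comm]
    refine Fintype.sum_congr _ _ fun i => Fintype.sum_congr _ _ fun j => ?_
    rw [Finset.sum_comm]
    exact Fintype.sum_congr _ _ fun k => Fintype.sum_congr _ _ fun l => by ring
  have hswap : ∑ i, ∑ j, ∑ k, ∑ l, S i l * S j k * t k l * t i j
      = ∑ i, ∑ j, ∑ k, ∑ l, S i k * S j l * t k l * t i j := by
    refine Fintype.sum_congr _ _ fun i => Fintype.sum_congr _ _ fun j => ?_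
    rw [Finset.sum_comm]
    exact Fintype.sum_congr _ _ fun k => Fintype.sum_congr _ _ fun l => by rw [ht.apply k l]
  have hsplit : isotropicForm lam mu S t
      = lam * ∑ i, ∑ j, ∑ k, ∑ l, S i j * S k l * t k l * t i j
        + mu * ∑ i, ∑ j, ∑ k, ∑ l, S i k * S j l * t k l * t i j
        + mu * ∑ i, ∑ j, ∑ k, ∑ l, S i l * S j k * t k l * t i j := by
    simp only [isotropicForm, Finset.mul_sum, ← Finset.sum_add_distrib]
    refine Fintype.sum_congr _ _ fun i => Fintype.sum_congr _ _ fun j =>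
      Fintype.sum_congr _ _ fun k => Fintype.sum_congr _ _ fun l => by ring
  rw [hsplit, hswap, hlam, hkron]
  ring

theorem isotropicForm_pos {lam mu : ℝ} (hlam : 0 ≤ lam) (hmu : 0 < mu) {S t : Matrix n n ℝ}
    (hS : S.PosDef) (ht : t.IsSymm) (ht0 : t ≠ 0) : 0 < isotropicForm lam mu S t := by
  have hvec : vec t ≠ 0 := vec_eq_zero_iff.not.2 ht0
  have hquad := (hS.kronecker hS).dotProduct_mulVec_pos hvec
  rw [star_trivial] at hquad
  rw [isotropicForm_eq lam mu S ht]
  positivity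

theorem isotropicForm_smul (lam mu : ℝ) (S t : Matrix n n ℝ) (r : ℝ) :
    isotropicForm lam mu S (r • t) = r ^ 2 * isotropicForm lam mu S t := by
  simp only [isotropicForm, Matrix.smul_apply, smul_eq_mul, Finset.mul_sum]
  refine Fintype.sum_congr _ _ fun i => Fintype.sum_congr _ _ fun j =>
    Fintype.sum_congr _ _ fun k => Fintype.sum_congr _ _ fun l => by ring

theorem continuous_isotropicForm (lam mu : ℝ) :
    Continuous fun p : Matrix n n ℝ × Matrix n n ℝ => isotropicForm lam mu p.1 p.2 := by
  unfold isotropicForm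
  fun_prop

theorem isCompact_isSymm_sum_sq_eq_one :
    IsCompact {t : Matrix n n ℝ | t.IsSymm ∧ ∑ i, ∑ j, t i j ^ 2 = 1} := by
  have hclosed : IsClosed {t : Matrix n n ℝ | t.IsSymm ∧ ∑ i, ∑ j, t i j ^ 2 = 1} :=
    (isClosed_eq continuous_id.matrix_transpose continuous_id).inter
      (isClosed_eq (by fun_prop) continuous_const)
  refine (isCompact_univ_pi fun _ => isCompact_univ_pi fun _ => isCompact_Icc
    (a := (-1 : ℝ)) (b := 1)).of_isClosed_subset hclosed fun t ht i _ j _ => ?_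
  have hle : t i j ^ 2 ≤ 1 := ht.2 ▸ (Finset.single_le_sum (fun j _ => sq_nonneg (t i j))
    (Finset.mem_univ j)).trans (Finset.single_le_sum (f := fun i => ∑ j, t i j ^ 2)
      (fun i _ => Finset.sum_nonneg fun j _ => sq_nonneg _) (Finset.mem_univ i))
  exact abs_le.1 ((sq_le_one_iff_abs_le_one _).1 hle)

theorem sum_sq_smul (t : Matrix n n ℝ) (r : ℝ) :
    ∑ i, ∑ j, (r • t) i j ^ 2 = r ^ 2 * ∑ i, ∑ j, t i j ^ 2 := by
  simp only [Matrix.smul_apply, smul_eq_mul, mul_pow, Finset.mul_sum]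

theorem IsCompact.exists_pos_mul_sum_sq_le_isotropicForm {𝒮 : Set (Matrix n n ℝ)}
    (h𝒮 : IsCompact 𝒮) (hpos : ∀ S ∈ 𝒮, S.PosDef) {lam mu : ℝ} (hlam : 0 ≤ lam) (hmu : 0 < mu) :
    ∃ c > 0, ∀ S ∈ 𝒮, ∀ t : Matrix n n ℝ, t.IsSymm →
      c * ∑ i, ∑ j, t i j ^ 2 ≤ isotropicForm lam mu S t := by
  obtain ⟨c, hc, hmin⟩ := (h𝒮.prod isCompact_isSymm_sum_sq_eq_one).exists_forall_le'
    (continuous_isotropicForm lam mu).continuousOn fun p hp =>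
      isotropicForm_pos hlam hmu (hpos _ hp.1) hp.2.1 fun h0 => by simpa [h0] using hp.2.2
  refine ⟨c, hc, fun S hS t ht => ?_⟩
  rcases eq_or_ne t 0 with rfl | ht0
  · simp [isotropicForm]
  set r := ∑ i, ∑ j, t i j ^ 2
  have hr : 0 < r := by
    obtain ⟨i, j, hij⟩ : ∃ i j, t i j ≠ 0 := by simpa [← Matrix.ext_iff] using ht0
    exact Finset.sum_pos' (fun i _ => Finset.sum_nonneg fun j _ => sq_nonneg _)
      ⟨i, Finset.mem_univ _, Finset.sum_pos' (fun j _ => sq_nonneg _)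
        ⟨j, Finset.mem_univ _, sq_pos_of_ne_zero hij⟩⟩
  have hunit : (√r)⁻¹ • t ∈ {t : Matrix n n ℝ | t.IsSymm ∧ ∑ i, ∑ j, t i j ^ 2 = 1} :=
    ⟨ht.smul _, by rw [sum_sq_smul, inv_pow, Real.sq_sqrt hr.le, inv_mul_cancel₀ hr.ne']⟩
  have hscaled := hmin (S, _) ⟨hS, hunit⟩
  rw [isotropicForm_smul, inv_pow, Real.sq_sqrt hr.le, le_inv_mul_iff₀ hr] at hscaled
  linarith

end IsotropicForm

section Smooth

variable {E : Type*} [NormedAddCommGroup E] [NormedSpace ℝ E] {s : Set E} {n : WithTop ℕ∞}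

theorem ContDiffOn.crossProduct {f g : E → Fin 3 → ℝ} (hf : ContDiffOn ℝ n f s)
    (hg : ContDiffOn ℝ n g s) : ContDiffOn ℝ n (fun y => f y ⨯₃ g y) s := by
  have hf' := contDiffOn_pi.1 hf
  have hg' := contDiffOn_pi.1 hg
  refine contDiffOn_pi.2 fun i => ?_
  fin_cases i <;> simp only [cross_apply] <;>
    exact ((hf' _).mul (hg' _)).sub ((hf' _).mul (hg' _))

theorem ContDiffOn.inv_sqrt_sum_sq_smul {ι : Type*} [Fintype ι] {f : E → ι → ℝ}
    (hf : ContDiffOn ℝ n f s) (hf0 : ∀ y ∈ s, f y ≠ 0) :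
    ContDiffOn ℝ n (fun y => (√(∑ i, f y i ^ 2))⁻¹ • f y) s := by
  have hpos : ∀ y ∈ s, 0 < ∑ i, f y i ^ 2 := fun y hy => by
    obtain ⟨i, hi⟩ := Function.ne_iff.1 (hf0 y hy)
    exact Finset.sum_pos' (fun i _ => sq_nonneg _) ⟨i, Finset.mem_univ i, sq_pos_of_ne_zero hi⟩
  have hsq : ContDiffOn ℝ n (fun y => ∑ i, f y i ^ 2) s :=
    ContDiffOn.sum fun i _ => (contDiffOn_pi.1 hf i).pow 2
  exact ((hsq.sqrt fun y hy => (hpos y hy).ne').inv fun y hy =>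
    (Real.sqrt_pos.2 (hpos y hy)).ne').smul hf

theorem ContDiffOn.continuousOn_fderiv_normalShift {F : Type*} [NormedAddCommGroup F]
    [NormedSpace ℝ F] {θ N : E → F} (hs : IsOpen s) (hθ : ContDiffOn ℝ 1 θ s)
    (hN : ContDiffOn ℝ 1 N s) :
    ContinuousOn (fderiv ℝ fun p : E × ℝ => θ p.1 + p.2 • N p.1) (s ×ˢ univ) := by
  have hfst : MapsTo Prod.fst (s ×ˢ (univ : Set ℝ)) s := fun p hp => hp.1
  refine ContDiffOn.continuousOn_fderiv_of_isOpen ?_ (hs.prod isOpen_univ) le_rfl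
  exact (hθ.comp contDiffOn_fst hfst).add (contDiffOn_snd.smul (hN.comp contDiffOn_fst hfst))

end Smooth

theorem continuousOn_metricTensor {s U : Set (Fin 2 → ℝ)} (hU : IsOpen U) (hsU : s ⊆ U)
    {θ : (Fin 2 → ℝ) → Fin 3 → ℝ} (hθ : ContDiffOn ℝ 2 θ U)
    {a : Fin 2 → (Fin 2 → ℝ) → Fin 3 → ℝ} (ha : ∀ α y, a α y = fderiv ℝ θ y (Pi.single α 1))
    (hind : ∀ y ∈ s, LinearIndependent ℝ ![a 0 y, a 1 y])
    {c : (Fin 2 → ℝ) → Fin 3 → ℝ}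
    (hc : ∀ y, c y = ![a 0 y 1 * a 1 y 2 - a 0 y 2 * a 1 y 1,
                       a 0 y 2 * a 1 y 0 - a 0 y 0 * a 1 y 2,
                       a 0 y 0 * a 1 y 1 - a 0 y 1 * a 1 y 0])
    {a3 : (Fin 2 → ℝ) → Fin 3 → ℝ} (ha3 : ∀ y, a3 y = (Real.sqrt (∑ i, c y i ^ 2))⁻¹ • c y)
    {Θ : (Fin 2 → ℝ) × ℝ → Fin 3 → ℝ} (hΘ : ∀ p, Θ p = θ p.1 + p.2 • a3 p.1)
    {gvec : Fin 3 → ((Fin 2 → ℝ) × ℝ) → Fin 3 → ℝ}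
    (hgvec0 : ∀ p, gvec 0 p = fderiv ℝ Θ p (Pi.single 0 1, 0))
    (hgvec1 : ∀ p, gvec 1 p = fderiv ℝ Θ p (Pi.single 1 1, 0))
    (hgvec2 : ∀ p, gvec 2 p = fderiv ℝ Θ p (0, 1))
    {G : ((Fin 2 → ℝ) × ℝ) → Matrix (Fin 3) (Fin 3) ℝ}
    (hG : ∀ p i j, G p i j = ∑ m, gvec i p m * gvec j p m) :
    ContinuousOn G (s ×ˢ univ) := by
  have ha' : ∀ α, ContDiffOn ℝ 1 (a α) U := fun α => by
    rw [funext (ha α)]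
    exact (hθ.fderiv_of_isOpen hU (by norm_num)).clm_apply contDiffOn_const
  have hc' : ContDiffOn ℝ 1 c U := by
    rw [show c = fun y => a 0 y ⨯₃ a 1 y from funext hc]
    exact (ha' 0).crossProduct (ha' 1)
  set V := U ∩ c ⁻¹' {0}ᶜ
  have hV : IsOpen V := hc'.continuousOn.isOpen_inter_preimage hU isOpen_compl_singleton
  have hsV : s ⊆ V := fun y hy => ⟨hsU hy, by
    rw [mem_preimage, hc y]
    exact crossProduct_ne_zero_iff_linearIndependent.2 (hind y hy)⟩
  have ha3' : ContDiffOn ℝ 1 a3 V := by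
    rw [funext ha3]
    exact (hc'.mono inter_subset_left).inv_sqrt_sum_sq_smul fun y hy => hy.2
  have hdΘ : ContinuousOn (fderiv ℝ Θ) (V ×ˢ univ) := by
    rw [funext hΘ]
    exact ((hθ.of_le one_le_two).mono inter_subset_left).continuousOn_fderiv_normalShift hV ha3'
  have hdir : ∀ v, ContinuousOn (fun p => fderiv ℝ Θ p v) (V ×ˢ univ) := fun v =>
    hdΘ.clm_apply continuousOn_const
  have hg : ∀ i, ContinuousOn (gvec i) (V ×ˢ univ) := by
    intro i
    fin_cases i
    exacts [(hdir _).congr fun p _ => hgvec0 p, (hdir _).congr fun p _ => hgvec1 p,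
      (hdir _).congr fun p _ => hgvec2 p]
  refine (continuousOn_pi.2 fun i => continuousOn_pi.2 fun j => ?_).mono
    (prod_mono hsV subset_rfl)
  simp only [hG]
  exact continuousOn_finsetSum _ fun m _ =>
    ((continuous_apply m).comp_continuousOn (hg i)).mul
      ((continuous_apply m).comp_continuousOn (hg j))

theorem stmt14_general (ω : Set (Fin 2 → ℝ)) (hωb : Bornology.IsBounded ω)
    (U : Set (Fin 2 → ℝ)) (hUo : IsOpen U) (hωU : closure ω ⊆ U)
    (θ : (Fin 2 → ℝ) → Fin 3 → ℝ) (hθ : ContDiffOn ℝ 3 θ U)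
    (a : Fin 2 → (Fin 2 → ℝ) → Fin 3 → ℝ)
    (ha : ∀ α y, a α y = fderiv ℝ θ y (Pi.single α 1))
    (hind : ∀ y ∈ closure ω, LinearIndependent ℝ ![a 0 y, a 1 y])
    (c : (Fin 2 → ℝ) → Fin 3 → ℝ)
    (hc : ∀ y, c y = ![a 0 y 1 * a 1 y 2 - a 0 y 2 * a 1 y 1,
                       a 0 y 2 * a 1 y 0 - a 0 y 0 * a 1 y 2,
                       a 0 y 0 * a 1 y 1 - a 0 y 1 * a 1 y 0])
    (a3 : (Fin 2 → ℝ) → Fin 3 → ℝ)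
    (ha3 : ∀ y, a3 y = (Real.sqrt (∑ i, c y i ^ 2))⁻¹ • c y)
    (Θ : (Fin 2 → ℝ) × ℝ → Fin 3 → ℝ)
    (hΘ : ∀ p, Θ p = θ p.1 + p.2 • a3 p.1)
    (gvec : Fin 3 → ((Fin 2 → ℝ) × ℝ) → Fin 3 → ℝ)
    (hgvec0 : ∀ p, gvec 0 p = fderiv ℝ Θ p (Pi.single 0 1, 0))
    (hgvec1 : ∀ p, gvec 1 p = fderiv ℝ Θ p (Pi.single 1 1, 0))
    (hgvec2 : ∀ p, gvec 2 p = fderiv ℝ Θ p (0, 1))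
    (ε₀ : ℝ)
    (hgind : ∀ p ∈ closure ω ×ˢ Icc (-ε₀) ε₀,
      LinearIndependent ℝ ![gvec 0 p, gvec 1 p, gvec 2 p])
    (lam mu : ℝ) (hlam : 0 ≤ lam) (hmu : 0 < mu)
    (G : ((Fin 2 → ℝ) × ℝ) → Matrix (Fin 3) (Fin 3) ℝ)
    (hG : ∀ p i j, G p i j = ∑ m, gvec i p m * gvec j p m)
    (Ginv : ℝ → ((Fin 2 → ℝ) × ℝ) → Matrix (Fin 3) (Fin 3) ℝ)
    (hGinv : ∀ ε p, Ginv ε p = (G (p.1, ε * p.2))⁻¹)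
    (Aε : ℝ → ((Fin 2 → ℝ) × ℝ) → Fin 3 → Fin 3 → Fin 3 → Fin 3 → ℝ)
    (hAε : ∀ ε p i j k l, Aε ε p i j k l = lam * Ginv ε p i j * Ginv ε p k l
      + mu * (Ginv ε p i k * Ginv ε p j l + Ginv ε p i l * Ginv ε p j k)) :
    ∃ Ce > (0 : ℝ), ∀ ε : ℝ, 0 < ε → ε ≤ ε₀ →
      ∀ p ∈ closure ω ×ˢ Icc (-1 : ℝ) 1,
        ∀ t : Matrix (Fin 3) (Fin 3) ℝ, t.IsSymm →
          ∑ i, ∑ j, |t i j| ^ 2 ≤ Ce * ∑ i, ∑ j, ∑ k, ∑ l, Aε ε p i j k l * t k l * t i j := by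
  set K := closure ω ×ˢ Icc (-ε₀) ε₀
  have hGpos : ∀ q ∈ K, (G q).PosDef := fun q hq => by
    have hgram : G q = of fun i j => gvec i q ⬝ᵥ gvec j q := ext (hG q)
    rw [hgram]
    exact posDef_of_linearIndependent_dotProduct (FinVec.etaExpand_eq (gvec · q) ▸ hgind q hq)
  have hGcont : ContinuousOn G K :=
    (continuousOn_metricTensor hUo hωU (hθ.of_le (by norm_num)) ha hind hc ha3 hΘ hgvec0 hgvec1
      hgvec2 hG).mono (prod_mono subset_rfl (subset_univ _))
  obtain ⟨C, hC, hbound⟩ := IsCompact.exists_pos_mul_sum_sq_le_isotropicForm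
    ((hωb.isCompact_closure.prod isCompact_Icc).image_of_continuousOn
      (hGcont.matrix_inv fun q hq => (hGpos q hq).det_pos.ne'))
    (forall_mem_image.2 fun q hq => (hGpos q hq).inv) hlam hmu
  refine ⟨C⁻¹, inv_pos.2 hC, fun ε hε hεε₀ p hp t ht => ?_⟩
  have hq : (p.1, ε * p.2) ∈ K := by
    refine ⟨hp.1, abs_le.1 ?_⟩
    rw [abs_mul, abs_of_pos hε]
    exact (mul_le_of_le_one_right hε.le (abs_le.2 hp.2)).trans hεε₀
  have hA : ∑ i, ∑ j, ∑ k, ∑ l, Aε ε p i j k l * t k l * t i j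
      = isotropicForm lam mu (G (p.1, ε * p.2))⁻¹ t := by
    simp only [hAε, hGinv, isotropicForm]
  simp_rw [sq_abs]
  rw [hA, inv_mul_eq_div, le_div_iff₀' hC]
  exact hbound _ (mem_image_of_mem _ hq) t ht

/-- Uniform positive definiteness of the scaled three-dimensional elasticity tensor
`A^{ijkl}(ε)`: the constant is independent of the point of the fixed domain and of the
thickness parameter `ε ∈ (0, ε₀]`. -/
theorem stmt14 (ω : Set (Fin 2 → ℝ)) (hωo : IsOpen ω) (hωb : Bornology.IsBounded ω)
    (hωc : IsConnected ω)
    (U : Set (Fin 2 → ℝ)) (hUo : IsOpen U) (hωU : closure ω ⊆ U)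
    (θ : (Fin 2 → ℝ) → Fin 3 → ℝ) (hθ : ContDiffOn ℝ 3 θ U) (hθinj : InjOn θ (closure ω))
    (a : Fin 2 → (Fin 2 → ℝ) → Fin 3 → ℝ)
    (ha : ∀ α y, a α y = fderiv ℝ θ y (Pi.single α 1))
    (hind : ∀ y ∈ closure ω, LinearIndependent ℝ ![a 0 y, a 1 y])
    (c : (Fin 2 → ℝ) → Fin 3 → ℝ)
    (hc : ∀ y, c y = ![a 0 y 1 * a 1 y 2 - a 0 y 2 * a 1 y 1,
                       a 0 y 2 * a 1 y 0 - a 0 y 0 * a 1 y 2,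
                       a 0 y 0 * a 1 y 1 - a 0 y 1 * a 1 y 0])
    (a3 : (Fin 2 → ℝ) → Fin 3 → ℝ)
    (ha3 : ∀ y, a3 y = (Real.sqrt (∑ i, c y i ^ 2))⁻¹ • c y)
    (Θ : (Fin 2 → ℝ) × ℝ → Fin 3 → ℝ)
    (hΘ : ∀ p, Θ p = θ p.1 + p.2 • a3 p.1)
    (gvec : Fin 3 → ((Fin 2 → ℝ) × ℝ) → Fin 3 → ℝ)
    (hgvec0 : ∀ p, gvec 0 p = fderiv ℝ Θ p (Pi.single 0 1, 0))
    (hgvec1 : ∀ p, gvec 1 p = fderiv ℝ Θ p (Pi.single 1 1, 0))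
    (hgvec2 : ∀ p, gvec 2 p = fderiv ℝ Θ p (0, 1))
    (ε₀ : ℝ) (hε₀ : 0 < ε₀)
    (hgind : ∀ p ∈ closure ω ×ˢ Icc (-ε₀) ε₀,
      LinearIndependent ℝ ![gvec 0 p, gvec 1 p, gvec 2 p])
    (lam mu : ℝ) (hlam : 0 ≤ lam) (hmu : 0 < mu)
    (G : ((Fin 2 → ℝ) × ℝ) → Matrix (Fin 3) (Fin 3) ℝ)
    (hG : ∀ p i j, G p i j = ∑ m, gvec i p m * gvec j p m)
    (Ginv : ℝ → ((Fin 2 → ℝ) × ℝ) → Matrix (Fin 3) (Fin 3) ℝ)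
    (hGinv : ∀ ε p, Ginv ε p = (G (p.1, ε * p.2))⁻¹)
    (Aε : ℝ → ((Fin 2 → ℝ) × ℝ) → Fin 3 → Fin 3 → Fin 3 → Fin 3 → ℝ)
    (hAε : ∀ ε p i j k l, Aε ε p i j k l = lam * Ginv ε p i j * Ginv ε p k l
      + mu * (Ginv ε p i k * Ginv ε p j l + Ginv ε p i l * Ginv ε p j k)) :
    ∃ Ce > (0 : ℝ), ∀ ε : ℝ, 0 < ε → ε ≤ ε₀ →
      ∀ p ∈ closure ω ×ˢ Icc (-1 : ℝ) 1,
        ∀ t : Matrix (Fin 3) (Fin 3) ℝ, t.IsSymm →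
          ∑ i, ∑ j, |t i j| ^ 2 ≤ Ce * ∑ i, ∑ j, ∑ k, ∑ l, Aε ε p i j k l * t k l * t i j :=
  stmt14_general ω hωb U hUo hωU θ hθ a ha hind c hc a3 ha3 Θ hΘ gvec hgvec0 hgvec1 hgvec2 ε₀ hgind
    lam mu hlam hmu G hG Ginv hGinv Aε hAε
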